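/- arXiv:2505.09360 — 2 statements merged into one kernel-verified Lean document; each statement's English description precedes it below -/
import Mathlib

section
/- For the digit set $D = \{(0,0)^t, (1,0)^t, (1,1)^t, (2,1)^t, (2,2)^t\} \subset \mathbb{Z}^2$, the zero set of the mask polynomial $m_D$ equals $\bigcup_{j=1}^{4}\left(\frac{j}{5}(1,1)^t + \mathbb{Z}^2\right)$. -/
/-!
Write `u = e(x)`, `v = e(y)` with `e(t) = exp(2πit)`, so that `5 m_D(x, y) = P(u, v)` with
`P(u, v) = 1 + u + uv + u²v + u²v²`. On the unit circle `conj u = u⁻¹`, so `P(u, v) = 0` forces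
the reciprocal polynomial `u²v² · conj P(u, v) = u²v² + uv² + uv + v + 1` to vanish too. The difference
of the two is `(u - v)(1 + uv)`, and `1 + uv = 0` is impossible because `P = 1 + (u + uv)(1 + uv)`.
Hence `u = v` and `P(u, u) = 1 + u + u² + u³ + u⁴`, whose zeros are the primitive fifth roots of
unity `e(j/5)`, `1 ≤ j ≤ 4`.
-/

/-- The mask polynomial of a finite digit set `D ⊂ ℤ²`. -/
noncomputable def maskPoly (D : Finset (ℤ × ℤ)) (ξ : ℝ × ℝ) : ℂ :=
  (D.card : ℂ)⁻¹ * ∑ d ∈ D, Complex.exp (2 * (Real.pi : ℂ) * Complex.I *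
    ((ξ.1 * d.1 + ξ.2 * d.2 : ℝ) : ℂ))

open Complex Finset
open scoped Real

noncomputable def expTwoPiI (t : ℝ) : ℂ := exp (2 * π * I * t)

theorem expTwoPiI_add (s t : ℝ) : expTwoPiI (s + t) = expTwoPiI s * expTwoPiI t := by
  rw [expTwoPiI, expTwoPiI, expTwoPiI, ← exp_add]
  push_cast
  ring_nf

theorem expTwoPiI_ne_zero (t : ℝ) : expTwoPiI t ≠ 0 := exp_ne_zero _

theorem expTwoPiI_mul_intCast (t : ℝ) (n : ℤ) : expTwoPiI (t * n) = expTwoPiI t ^ n := by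
  rw [expTwoPiI, expTwoPiI, ← exp_int_mul]
  push_cast
  ring_nf

theorem norm_expTwoPiI (t : ℝ) : ‖expTwoPiI t‖ = 1 := by
  rw [expTwoPiI, show 2 * π * I * t = ((2 * π * t : ℝ) : ℂ) * I by push_cast; ring]
  exact norm_exp_ofReal_mul_I _

theorem expTwoPiI_eq_one_iff (t : ℝ) : expTwoPiI t = 1 ↔ ∃ n : ℤ, t = n := by
  have h2πI : 2 * π * I ≠ 0 := by simp [Real.pi_ne_zero]
  rw [expTwoPiI, exp_eq_one_iff]
  refine exists_congr fun n => ?_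
  rw [mul_comm _ (2 * π * I), mul_right_inj' h2πI]
  exact_mod_cast Iff.rfl

theorem expTwoPiI_eq_iff (s t : ℝ) : expTwoPiI s = expTwoPiI t ↔ ∃ n : ℤ, s = t + n := by
  have h : expTwoPiI s = expTwoPiI (s - t) * expTwoPiI t := by
    rw [← expTwoPiI_add, sub_add_cancel]
  rw [h, mul_eq_right₀ (expTwoPiI_ne_zero t), expTwoPiI_eq_one_iff]
  exact exists_congr fun n => by constructor <;> intro <;> linarith

theorem geom_sum_eq_zero_iff_pow_eq_one {K : Type*} [Field K] [CharZero K] {u : K} {n : ℕ}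
    (hn : n ≠ 0) : ∑ i ∈ range n, u ^ i = 0 ↔ u ^ n = 1 ∧ u ≠ 1 := by
  by_cases hu : u = 1
  · simp [hu, hn]
  · simp [geom_sum_eq hu, sub_eq_zero, hu]

def digitPoly (u v : ℂ) : ℂ := 1 + u + u * v + u ^ 2 * v + u ^ 2 * v ^ 2

theorem maskPoly_eq_digitPoly (x y : ℝ) :
    maskPoly ({(0,0), (1,0), (1,1), (2,1), (2,2)} : Finset (ℤ × ℤ)) (x, y) =
      (5 : ℂ)⁻¹ * digitPoly (expTwoPiI x) (expTwoPiI y) := by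
  have h : ∀ a b : ℤ, exp (2 * π * I * ((x * a + y * b : ℝ) : ℂ)) =
      expTwoPiI x ^ a * expTwoPiI y ^ b := fun a b => by
    rw [← expTwoPiI, expTwoPiI_add, expTwoPiI_mul_intCast, expTwoPiI_mul_intCast]
  simp only [maskPoly, digitPoly, h]
  simp [add_assoc]

theorem digitPoly_eq_zero_iff_of_norm_eq_one {u v : ℂ} (hu : ‖u‖ = 1) (hv : ‖v‖ = 1) :
    digitPoly u v = 0 ↔ u = v ∧ ∑ i ∈ range 5, u ^ i = 0 := by
  rw [digitPoly]
  constructor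
  · intro hP
    have hu0 : u ≠ 0 := norm_ne_zero_iff.mp (by simp [hu])
    have hv0 : v ≠ 0 := norm_ne_zero_iff.mp (by simp [hv])
    have hQ : u ^ 2 * v ^ 2 + u * v ^ 2 + u * v + v + 1 = 0 := by
      have h := congrArg (starRingEnd ℂ) hP
      simp only [map_add, map_mul, map_one, map_pow, map_zero, ← inv_eq_conj hu,
        ← inv_eq_conj hv] at h
      field_simp at h
      linear_combination h
    have hfactor : (u - v) * (1 + u * v) = 0 := by linear_combination hP - hQ
    have huv : 1 + u * v ≠ 0 := fun h => one_ne_zero (by linear_combination hP - (u + u * v) * h)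
    obtain rfl : u = v := sub_eq_zero.mp ((mul_eq_zero.mp hfactor).resolve_right huv)
    refine ⟨rfl, ?_⟩
    simp only [sum_range_succ, sum_range_zero]
    linear_combination hP
  · rintro ⟨rfl, h⟩
    simp only [sum_range_succ, sum_range_zero] at h
    linear_combination h

theorem expTwoPiI_pow_eq_one_and_ne_one_iff {n : ℕ} (hn : 0 < n) (t : ℝ) :
    expTwoPiI t ^ n = 1 ∧ expTwoPiI t ≠ 1 ↔ ∃ j ∈ Icc 1 (n - 1), ∃ m : ℤ, t = j / n + m := by
  have hn' : (n : ℝ) ≠ 0 := by positivity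
  have hpow : expTwoPiI t ^ n = expTwoPiI (t * n) := by
    simpa using (expTwoPiI_mul_intCast t n).symm
  rw [hpow, ne_eq, expTwoPiI_eq_one_iff, expTwoPiI_eq_one_iff]
  constructor
  · rintro ⟨⟨k, hk⟩, hnot⟩
    have hdiv : ((k % n : ℤ) : ℝ) + n * (k / n : ℤ) = k := by
      exact_mod_cast Int.emod_add_mul_ediv k n
    have ht : t = ((k % n : ℤ) : ℝ) / n + (k / n : ℤ) := by
      field_simp
      linarith
    have hmod0 : k % n ≠ 0 := fun h => hnot ⟨k / n, by simpa [h] using ht⟩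
    have hmod : 0 ≤ k % n ∧ k % n < n :=
      ⟨Int.emod_nonneg k (by omega), Int.emod_lt_of_pos k (by omega)⟩
    refine ⟨(k % n).toNat, mem_Icc.mpr (by omega), k / n, ?_⟩
    have hj : ((k % n).toNat : ℝ) = ((k % n : ℤ) : ℝ) := by
      exact_mod_cast Int.toNat_of_nonneg hmod.1
    rw [ht, hj]
  · rintro ⟨j, hj, m, rfl⟩
    rw [mem_Icc] at hj
    refine ⟨⟨j + m * n, by field_simp; push_cast; ring⟩, ?_⟩
    rintro ⟨m', hm'⟩
    have hj' : (j : ℤ) = (m' - m) * n := by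
      have : (j : ℝ) = (m' - m) * n := by field_simp at hm'; linarith
      exact_mod_cast this
    have hjn : 0 < (j : ℤ) ∧ (j : ℤ) < n := by omega
    rcases le_or_gt (m' - m) 0 with h | h <;> nlinarith

/-- The zero set of the mask polynomial of `D = {(0,0),(1,0),(1,1),(2,1),(2,2)}`
equals `⋃_{j=1}^{4} (j/5)(1,1)ᵗ + ℤ²`. -/
theorem stmt2 :
    {ξ : ℝ × ℝ | maskPoly ({(0,0), (1,0), (1,1), (2,1), (2,2)} : Finset (ℤ × ℤ)) ξ = 0} =
      {ξ : ℝ × ℝ | ∃ j ∈ Finset.Icc (1:ℕ) 4, ∃ z : ℤ × ℤ,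
        ξ = ((j:ℝ)/5 + (z.1:ℝ), (j:ℝ)/5 + (z.2:ℝ))} := by
  ext ⟨x, y⟩
  rw [Set.mem_ofPred_eq, Set.mem_ofPred_eq, maskPoly_eq_digitPoly, mul_eq_zero,
    or_iff_right (by norm_num),
    digitPoly_eq_zero_iff_of_norm_eq_one (norm_expTwoPiI x) (norm_expTwoPiI y),
    geom_sum_eq_zero_iff_pow_eq_one (by norm_num), expTwoPiI_eq_iff,
    expTwoPiI_pow_eq_one_and_ne_one_iff (by norm_num)]
  constructor
  · rintro ⟨⟨n, hxy⟩, j, hj, m, hx⟩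
    exact ⟨j, hj, (m, m - n), by ext <;> push_cast <;> linarith⟩
  · rintro ⟨j, hj, z, hξ⟩
    rw [Prod.mk.injEq] at hξ
    exact ⟨⟨z.1 - z.2, by push_cast; linarith⟩, j, hj, z.1, hξ.1⟩
end

section
/- For the digit set $D = \{(0,0)^t, (1,0)^t, (0,1)^t, (1,1)^t, (3,3)^t\} \subset \mathbb{Z}^2$, the zero set of the mask polynomial $m_D$ equals $\left(\bigcup_{j=1}^{4}\left(\frac{j}{5}(1,2)^t + \mathbb{Z}^2\right)\right) \cup \left(\bigcup_{j=1}^{4}\left(\frac{j}{5}(1,3)^t + \mathbb{Z}^2\right)\right)$. -/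
open Complex

local notation "𝐞" r:max => Complex.exp (2 * (Real.pi : ℂ) * Complex.I * ((r : ℝ) : ℂ))

lemma norm_exp_two_pi_I_mul (r : ℝ) : ‖𝐞 r‖ = 1 := by
  rw [show 2 * (Real.pi : ℂ) * I * r = ((2 * Real.pi * r : ℝ) : ℂ) * I by push_cast; ring]
  exact norm_exp_ofReal_mul_I _

lemma exp_two_pi_I_mul_eq_iff (r s : ℝ) : 𝐞 r = 𝐞 s ↔ ∃ m : ℤ, r = s + m := by
  rw [exp_eq_exp_iff_exists_int]
  refine exists_congr fun m => ?_
  rw [show 2 * (Real.pi : ℂ) * I * s + m * (2 * Real.pi * I)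
      = 2 * (Real.pi : ℂ) * I * ((s + m : ℝ) : ℂ) by push_cast; ring,
    mul_right_inj' (by simp [Real.pi_ne_zero, I_ne_zero]), ofReal_inj]

lemma exp_two_pi_I_mul_eq_one_iff (r : ℝ) : 𝐞 r = 1 ↔ ∃ m : ℤ, r = m := by
  simpa using exp_two_pi_I_mul_eq_iff r 0

lemma exp_two_pi_I_mul_add (r s : ℝ) : 𝐞 (r + s) = 𝐞 r * 𝐞 s := by
  rw [← exp_add]; push_cast; ring_nf

lemma exp_two_pi_I_nat_mul (n : ℕ) (r : ℝ) : 𝐞 (n * r) = 𝐞 r ^ n := by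
  rw [← exp_nat_mul]; push_cast; ring_nf

lemma maskPoly_eq (a b : ℝ) :
    maskPoly ({(0,0), (1,0), (0,1), (1,1), (3,3)} : Finset (ℤ × ℤ)) (a, b) =
      (5 : ℂ)⁻¹ * (1 + 𝐞 a + 𝐞 b + 𝐞 a * 𝐞 b + 𝐞 a ^ 3 * 𝐞 b ^ 3) := by
  have hcard : ({(0,0), (1,0), (0,1), (1,1), (3,3)} : Finset (ℤ × ℤ)).card = 5 := by decide
  have hcube (r : ℝ) : 𝐞 (r * 3) = 𝐞 r ^ 3 := by
    simpa [mul_comm] using exp_two_pi_I_nat_mul 3 r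
  rw [maskPoly, hcard, Finset.sum_insert (by decide), Finset.sum_insert (by decide),
    Finset.sum_insert (by decide), Finset.sum_insert (by decide), Finset.sum_singleton]
  simp only [Int.cast_zero, Int.cast_one, Int.cast_ofNat, mul_zero, mul_one, add_zero, zero_add,
    ofReal_zero, exp_zero, exp_two_pi_I_mul_add, hcube]
  ring

lemma mul_pow_five_eq_one {x y : ℂ} (hx : ‖x‖ = 1) (hy : ‖y‖ = 1)
    (h : 1 + x + y + x * y + x ^ 3 * y ^ 3 = 0) : (x * y) ^ 5 = 1 := by
  have hx0 : x ≠ 0 := norm_ne_zero_iff.mp (by simp [hx])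
  have hy0 : y ≠ 0 := norm_ne_zero_iff.mp (by simp [hy])
  have hconj := congrArg (starRingEnd ℂ) h
  simp only [map_add, map_mul, map_one, map_pow, map_zero, ← inv_eq_conj hx,
    ← inv_eq_conj hy] at hconj
  field_simp at hconj
  linear_combination (x * y) ^ 2 * h - hconj

lemma geom_sum_five_eq_zero {R : Type*} [CommRing R] [IsDomain R] {x : R} (hx5 : x ^ 5 = 1)
    (hx1 : x ≠ 1) :
    1 + x + x ^ 2 + x ^ 3 + x ^ 4 = 0 :=
  (mul_eq_zero.mp (by linear_combination hx5 : (x - 1) * (1 + x + x ^ 2 + x ^ 3 + x ^ 4) = 0)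
    ).resolve_left (sub_ne_zero.mpr hx1)

lemma pow_five_eq_one_and_eq_sq_or_eq_cube {x y : ℂ} (hx : ‖x‖ = 1) (hy : ‖y‖ = 1)
    (h : 1 + x + y + x * y + x ^ 3 * y ^ 3 = 0) : x ^ 5 = 1 ∧ (y = x ^ 2 ∨ y = x ^ 3) := by
  set p := x * y
  have hx0 : x ≠ 0 := norm_ne_zero_iff.mp (by simp [hx])
  have hp5 : p ^ 5 = 1 := mul_pow_five_eq_one hx hy h
  have hp1 : p ≠ 1 := by
    intro hp1
    have hsum : x + y = -3 := by linear_combination h - (p ^ 2 + p + 2) * hp1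
    have := norm_add_le x y
    rw [hsum, hx, hy] at this
    norm_num at this
  have hcyc := geom_sum_five_eq_zero hp5 hp1
  have hroots : (x - p ^ 2) * (x - p ^ 4) = 0 := by
    linear_combination x * h - x * hcyc + p * hp5
  rcases mul_eq_zero.mp hroots with hxp | hxp
  · refine ⟨by
      linear_combination (x ^ 4 + x ^ 3 * p ^ 2 + x ^ 2 * p ^ 4 + x * p ^ 6 + p ^ 8) * hxp
        + (p ^ 5 + 1) * hp5, Or.inl (mul_left_cancel₀ hx0 ?_)⟩
    linear_combination (-(x ^ 2 + x * p ^ 2 + p ^ 4)) * hxp - p * hp5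
  · refine ⟨by
      linear_combination (x ^ 4 + x ^ 3 * p ^ 4 + x ^ 2 * p ^ 8 + x * p ^ 12 + p ^ 16) * hxp
        + (p ^ 15 + p ^ 10 + p ^ 5 + 1) * hp5, Or.inr (mul_left_cancel₀ hx0 ?_)⟩
    linear_combination (-(x ^ 3 + x ^ 2 * p ^ 4 + x * p ^ 8 + p ^ 12)) * hxp
      - p * (p ^ 10 + p ^ 5 + 1) * hp5

lemma mask_eq_zero_iff_of_norm_eq_one {x y : ℂ} (hx : ‖x‖ = 1) (hy : ‖y‖ = 1) :
    1 + x + y + x * y + x ^ 3 * y ^ 3 = 0 ↔ (x ^ 5 = 1 ∧ x ≠ 1) ∧ (y = x ^ 2 ∨ y = x ^ 3) := by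
  constructor
  · intro h
    obtain ⟨hx5, hy⟩ := pow_five_eq_one_and_eq_sq_or_eq_cube hx hy h
    refine ⟨⟨hx5, fun hx1 => ?_⟩, hy⟩
    rcases hy with rfl | rfl <;> subst hx1 <;> norm_num at h
  · rintro ⟨⟨hx5, hx1⟩, rfl | rfl⟩
    · linear_combination geom_sum_five_eq_zero hx5 hx1 + x ^ 4 * hx5
    · linear_combination geom_sum_five_eq_zero hx5 hx1 + x ^ 2 * (x ^ 5 + 1) * hx5

lemma exp_two_pi_I_mul_eq_pow_iff (n : ℕ) (a b : ℝ) :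
    𝐞 b = 𝐞 a ^ n ↔ ∃ m : ℤ, b = n * a + m := by
  rw [← exp_two_pi_I_nat_mul, exp_two_pi_I_mul_eq_iff]

lemma exp_two_pi_I_mul_pow_five_eq_one_and_ne_one_iff (a : ℝ) :
    (𝐞 a ^ 5 = 1 ∧ 𝐞 a ≠ 1) ↔ ∃ j ∈ Finset.Icc (1 : ℕ) 4, ∃ k : ℤ, a = j / 5 + k := by
  rw [← exp_two_pi_I_nat_mul, exp_two_pi_I_mul_eq_one_iff, Ne, exp_two_pi_I_mul_eq_one_iff]
  constructor
  · rintro ⟨⟨n, hn⟩, hnot⟩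
    rw [Nat.cast_ofNat] at hn
    have hdiv : (n : ℝ) = 5 * (n / 5 : ℤ) + (n % 5 : ℤ) := by
      exact_mod_cast (Int.mul_ediv_add_emod n 5).symm
    have hrem : n % 5 ≠ 0 := fun h0 => hnot ⟨n / 5, by rw [h0, Int.cast_zero] at hdiv; linarith⟩
    refine ⟨(n % 5).toNat, Finset.mem_Icc.mpr (by omega), n / 5, ?_⟩
    have hj : ((n % 5).toNat : ℝ) = (n % 5 : ℤ) := by
      exact_mod_cast Int.toNat_of_nonneg (Int.emod_nonneg n (by norm_num))
    linarith
  · rintro ⟨j, hj, k, rfl⟩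
    rw [Finset.mem_Icc] at hj
    refine ⟨⟨j + 5 * k, by push_cast; ring⟩, ?_⟩
    rintro ⟨m, hm⟩
    have : (j : ℤ) = 5 * (m - k) := by
      have : (j : ℝ) = 5 * (m - k) := by linear_combination 5 * hm
      exact_mod_cast this
    omega

lemma exists_fifth_and_exists_mul_add_iff (c : ℕ) (a b : ℝ) :
    ((∃ j ∈ Finset.Icc (1 : ℕ) 4, ∃ k : ℤ, a = j / 5 + k) ∧ ∃ m : ℤ, b = c * a + m) ↔
      ∃ j ∈ Finset.Icc (1 : ℕ) 4, ∃ z : ℤ × ℤ,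
        (a, b) = ((j : ℝ) / 5 + z.1, c * (j : ℝ) / 5 + z.2) := by
  constructor
  · rintro ⟨⟨j, hj, k, rfl⟩, m, rfl⟩
    exact ⟨j, hj, (k, c * k + m), Prod.ext rfl (by push_cast; ring)⟩
  · rintro ⟨j, hj, z, hz⟩
    obtain ⟨rfl, rfl⟩ := Prod.mk.inj hz
    exact ⟨⟨j, hj, z.1, rfl⟩, z.2 - c * z.1, by push_cast; ring⟩

/-- The zero set of the mask polynomial of `D = {(0,0),(1,0),(0,1),(1,1),(3,3)}`
equals `(⋃_{j=1}^{4} (j/5)(1,2)ᵗ + ℤ²) ∪ (⋃_{j=1}^{4} (j/5)(1,3)ᵗ + ℤ²)`. -/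
theorem stmt3 :
    {ξ : ℝ × ℝ | maskPoly ({(0,0), (1,0), (0,1), (1,1), (3,3)} : Finset (ℤ × ℤ)) ξ = 0} =
      {ξ : ℝ × ℝ | ∃ j ∈ Finset.Icc (1:ℕ) 4, ∃ z : ℤ × ℤ,
        ξ = ((j:ℝ)/5 + (z.1:ℝ), 2*(j:ℝ)/5 + (z.2:ℝ))} ∪
      {ξ : ℝ × ℝ | ∃ j ∈ Finset.Icc (1:ℕ) 4, ∃ z : ℤ × ℤ,
        ξ = ((j:ℝ)/5 + (z.1:ℝ), 3*(j:ℝ)/5 + (z.2:ℝ))} := by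
  ext ⟨a, b⟩
  rw [Set.mem_union, Set.mem_ofPred_eq, Set.mem_ofPred_eq, Set.mem_ofPred_eq, maskPoly_eq,
    mul_eq_zero, or_iff_right (by norm_num),
    mask_eq_zero_iff_of_norm_eq_one (norm_exp_two_pi_I_mul a) (norm_exp_two_pi_I_mul b),
    exp_two_pi_I_mul_pow_five_eq_one_and_ne_one_iff, exp_two_pi_I_mul_eq_pow_iff,
    exp_two_pi_I_mul_eq_pow_iff, and_or_left]
  simpa only [Nat.cast_ofNat] using or_congr (exists_fifth_and_exists_mul_add_iff 2 a b)
    (exists_fifth_and_exists_mul_add_iff 3 a b)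
end
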